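/- The map D : ℋ₃(ℝ) → ℝ³ defined by D(x₁,x₂,x₃) = (x₁, λx₂, (λ-1)x₃ + x₁x₂) is a bijection for every λ ∈ ℝ \ {0,1}, and for each g ∈ ℋ₃(ℝ) the composition D ∘ L_g ∘ D^{-1} is an affine map of ℝ³ (where L_g is left multiplication by g). -/

import Mathlib

/-- The Heisenberg group product carried on Fin 3 → ℝ. -/
def h3MulF (a b : Fin 3 → ℝ) : Fin 3 → ℝ :=
  ![a 0 + b 0, a 1 + b 1, a 2 + b 2 + a 0 * b 1]

/-- The developing map D(x₁,x₂,x₃) = (x₁, λx₂, (λ-1)x₃ + x₁x₂). -/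
def devMap (l : ℝ) (x : Fin 3 → ℝ) : Fin 3 → ℝ :=
  ![x 0, l * x 1, (l - 1) * x 2 + x 0 * x 1]

/-! `D` can be inverted coordinate by coordinate, dividing by `λ` and then by `λ - 1`. In the
coordinates `D`, left multiplication by `g` becomes `v ↦ A_g v + D(g)` with `A_g` unipotent: in
the third coordinate of `D(g x)` the product contributes `(λ - 1) g₁x₂` and `(g₁ + x₁)(g₂ + x₂)`
contributes `g₁x₂ + g₂x₁ + x₁x₂`, which add up to `g₂ · D(x)₁ + g₁ · D(x)₂` plus the terms of
`D(x)₃` and `D(g)₃`. -/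

noncomputable def devInv (l : ℝ) (v : Fin 3 → ℝ) : Fin 3 → ℝ :=
  ![v 0, v 1 / l, (v 2 - v 0 * (v 1 / l)) / (l - 1)]

theorem devInv_devMap {l : ℝ} (hl0 : l ≠ 0) (hl1 : l ≠ 1) :
    Function.LeftInverse (devInv l) (devMap l) := by
  have hl1' : l - 1 ≠ 0 := sub_ne_zero.mpr hl1
  intro x
  ext i
  fin_cases i <;> simp [devMap, devInv, hl0, hl1']

theorem devMap_devInv {l : ℝ} (hl0 : l ≠ 0) (hl1 : l ≠ 1) :
    Function.RightInverse (devInv l) (devMap l) := by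
  have hl1' : l - 1 ≠ 0 := sub_ne_zero.mpr hl1
  intro v
  ext i
  fin_cases i <;> simp [devMap, devInv, hl0, hl1', mul_div_cancel₀]

theorem devMap_bijective {l : ℝ} (hl0 : l ≠ 0) (hl1 : l ≠ 1) : Function.Bijective (devMap l) :=
  ⟨(devInv_devMap hl0 hl1).injective, (devMap_devInv hl0 hl1).surjective⟩

def devLinear (g : Fin 3 → ℝ) : Matrix (Fin 3) (Fin 3) ℝ :=
  !![1, 0, 0; 0, 1, 0; g 1, g 0, 1]

theorem det_devLinear (g : Fin 3 → ℝ) : (devLinear g).det = 1 := by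
  simp [devLinear, Matrix.det_fin_three]

theorem devMap_h3MulF (l : ℝ) (g x : Fin 3 → ℝ) :
    devMap l (h3MulF g x) = (devLinear g).mulVec (devMap l x) + devMap l g := by
  ext i
  fin_cases i <;> simp [devMap, h3MulF, devLinear, Matrix.mulVec_eq_sum, Fin.sum_univ_three] <;> ring

theorem stmt10 (l : ℝ) (hl0 : l ≠ 0) (hl1 : l ≠ 1) :
    Function.Bijective (devMap l) ∧
      (∀ g : Fin 3 → ℝ, ∃ (A : Matrix (Fin 3) (Fin 3) ℝ) (b : Fin 3 → ℝ),
        IsUnit A.det ∧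
        ∀ v, devMap l (h3MulF g (Function.invFun (devMap l) v)) = A.mulVec v + b) := by
  have hbij := devMap_bijective hl0 hl1
  refine ⟨hbij, fun g => ⟨devLinear g, devMap l g, by simp [det_devLinear], fun v => ?_⟩⟩
  rw [devMap_h3MulF, Function.rightInverse_invFun hbij.surjective v]
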